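/- arXiv:1210.7795 — 5 statements merged into one kernel-verified Lean document; each statement's English description precedes it below -/
import Mathlib

section
/- For every n ≥ 1 and every t ∈ [-1,1), the derivative in x at x = 1 of τ_n(x,t) := ((1-xt)/(x-t))(T_n(x)-T_n(t)) equals T_n'(1) - ((1+t)/(1-t))·(T_n(1) - T_n(t)), and this quantity lies in the interval [-T_n'(1), T_n'(1)]. -/
/-- Chebyshev polynomial of the first kind, as a real function. -/
noncomputable def Tch (n : ℕ) (x : ℝ) : ℝ := (Polynomial.Chebyshev.T ℝ n).eval x

/-!
The Möbius factor `(1 - x t) / (x - t)` equals `1` at `x = 1` with derivative `-(1 + t) / (1 - t)`,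
so the product rule gives the formula. For the bounds, `0 ≤ 1 - T_n(t) ≤ n² (1 - t)` on `[-1, 1]`,
and `1 + t ≤ 2` turns this into `0 ≤ (1 + t) / (1 - t) · (1 - T_n(t)) ≤ 2 n²`.
-/

open Polynomial Polynomial.Chebyshev

lemma hasDerivAt_one_sub_mul_div_sub {t : ℝ} (ht : t ≠ 1) :
    HasDerivAt (fun y : ℝ => (1 - y * t) / (y - t)) (-((1 + t) / (1 - t))) 1 := by
  have hden : (1 : ℝ) - t ≠ 0 := sub_ne_zero.mpr ht.symm
  have hnum : HasDerivAt (fun y : ℝ => 1 - y * t) (-t) 1 := by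
    simpa using ((hasDerivAt_id (1 : ℝ)).mul_const t).const_sub 1
  refine (hnum.fun_div ((hasDerivAt_id' (x := (1 : ℝ))).sub_const t) hden).congr_deriv ?_
  field_simp
  ring

lemma deriv_one_sub_mul_div_sub_mul_eval_sub (p : ℝ[X]) {t : ℝ} (ht : t ≠ 1) :
    deriv (fun y : ℝ => (1 - y * t) / (y - t) * (p.eval y - p.eval t)) 1
      = (derivative p).eval 1 - (1 + t) / (1 - t) * (p.eval 1 - p.eval t) := by
  have hden : (1 : ℝ) - t ≠ 0 := sub_ne_zero.mpr ht.symm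
  have h := (hasDerivAt_one_sub_mul_div_sub ht).fun_mul ((p.hasDerivAt 1).sub_const (p.eval t))
  rw [h.deriv, one_mul, div_self hden]
  ring

-- Mean value theorem, using `|T_n'| ≤ T_n'(1) = n²` on `[-1, 1]`.
lemma one_sub_eval_T_real_le (n : ℤ) {x : ℝ} (hx : x ∈ Set.Icc (-1 : ℝ) 1) :
    1 - (T ℝ n).eval x ≤ (n : ℝ) ^ 2 * (1 - x) := by
  have hderiv : ∀ y ∈ interior (Set.Icc (-1 : ℝ) 1), deriv (fun y => (T ℝ n).eval y) y ≤ n ^ 2 := by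
    intro y hy
    rw [interior_Icc] at hy
    rw [Polynomial.deriv, ← derivative_T_eval_one (R := ℝ) n]
    have := abs_iterate_derivative_T_real_le n 1 (abs_le.mpr ⟨hy.1.le, hy.2.le⟩)
    exact (le_abs_self _).trans this
  have := (convex_Icc (-1 : ℝ) 1).image_sub_le_mul_sub_of_deriv_le
    (T ℝ n).continuousOn (T ℝ n).differentiableOn hderiv x hx 1 ⟨by norm_num, le_rfl⟩ hx.2
  rwa [T_eval_one] at this

lemma sq_sub_div_mul_one_sub_eval_T_mem_Icc (n : ℤ) {t : ℝ} (ht : t ∈ Set.Ico (-1 : ℝ) 1) :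
    (n : ℝ) ^ 2 - (1 + t) / (1 - t) * (1 - (T ℝ n).eval t)
      ∈ Set.Icc (-(n : ℝ) ^ 2) ((n : ℝ) ^ 2) := by
  obtain ⟨ht₁, ht₂⟩ := ht
  have htIcc : t ∈ Set.Icc (-1 : ℝ) 1 := ⟨ht₁, ht₂.le⟩
  have hpos : 0 < 1 - t := by linarith
  have hdrop_nonneg : 0 ≤ 1 - (T ℝ n).eval t := by
    linarith [(eval_T_real_mem_Icc n htIcc).2]
  have hdrop_le := one_sub_eval_T_real_le n htIcc
  have hratio_nonneg : 0 ≤ (1 + t) / (1 - t) * (1 - (T ℝ n).eval t) :=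
    mul_nonneg (div_nonneg (by linarith) hpos.le) hdrop_nonneg
  have hratio_le : (1 + t) / (1 - t) * (1 - (T ℝ n).eval t) ≤ 2 * (n : ℝ) ^ 2 := by
    rw [div_mul_eq_mul_div, div_le_iff₀ hpos]
    nlinarith
  constructor <;> linarith

theorem stmt_1_general (n : ℕ) (t : ℝ) (ht : t ∈ Set.Ico (-1 : ℝ) 1) :
    deriv (fun y : ℝ => (1 - y * t) / (y - t) * (Tch n y - Tch n t)) 1
      = (n : ℝ) ^ 2 - (1 + t) / (1 - t) * (Tch n 1 - Tch n t) ∧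
    deriv (fun y : ℝ => (1 - y * t) / (y - t) * (Tch n y - Tch n t)) 1
      ∈ Set.Icc (-(n : ℝ) ^ 2) ((n : ℝ) ^ 2) := by
  have hformula := deriv_one_sub_mul_div_sub_mul_eval_sub (T ℝ n) ht.2.ne
  rw [derivative_T_eval_one] at hformula
  unfold Tch
  rw [hformula, T_eval_one, Int.cast_natCast]
  exact ⟨rfl, mod_cast sq_sub_div_mul_one_sub_eval_T_mem_Icc n ht⟩

theorem stmt_1 (n : ℕ) (hn : 1 ≤ n) (t : ℝ) (ht : t ∈ Set.Ico (-1 : ℝ) 1) :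
    deriv (fun y : ℝ => (1 - y * t) / (y - t) * (Tch n y - Tch n t)) 1
      = (n : ℝ) ^ 2 - (1 + t) / (1 - t) * (Tch n 1 - Tch n t) ∧
    deriv (fun y : ℝ => (1 - y * t) / (y - t) * (Tch n y - Tch n t)) 1
      ∈ Set.Icc (-(n : ℝ) ^ 2) ((n : ℝ) ^ 2) :=
  stmt_1_general n t ht
end

section
/- For every n ≥ 1 and every t ∈ [-1,1), one has (T_n(1) - T_n(t))/(1 - t) ≤ T_n'(1) = n². -/
lemma abs_sin_nat_mul_le (n : ℕ) (x : ℝ) : |Real.sin (n * x)| ≤ n * |Real.sin x| := by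
  induction n with
  | zero => simp
  | succ n ih =>
    have h : ((n : ℝ) + 1) * x = n * x + x := by ring
    push_cast
    rw [h, Real.sin_add]
    calc |Real.sin (n * x) * Real.cos x + Real.cos (n * x) * Real.sin x|
        ≤ |Real.sin (n * x) * Real.cos x| + |Real.cos (n * x) * Real.sin x| := abs_add_le _ _
      _ ≤ |Real.sin (n * x)| * 1 + 1 * |Real.sin x| := by
          rw [abs_mul, abs_mul]
          gcongr <;> [exact Real.abs_cos_le_one x; exact Real.abs_cos_le_one _]
      _ ≤ n * |Real.sin x| + 1 * |Real.sin x| := by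
          rw [mul_one]; gcongr
      _ = (n + 1) * |Real.sin x| := by ring

lemma one_sub_cos (x : ℝ) : 1 - Real.cos x = 2 * Real.sin (x / 2) ^ 2 := by
  have h : Real.cos x = Real.cos (2 * (x / 2)) := by ring_nf
  rw [h, Real.cos_two_mul]
  have := Real.sin_sq_add_cos_sq (x / 2)
  nlinarith

lemma U_eval_one' : ∀ m : ℕ, (Polynomial.Chebyshev.U ℝ (m : ℤ)).eval 1 = m + 1 := by
  intro m
  induction m using Nat.strong_induction_on with
  | _ m ih =>
    match m with
    | 0 => simp [Polynomial.Chebyshev.U_zero]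
    | 1 => norm_num [Polynomial.Chebyshev.U_one]
    | (k + 2) =>
      have h := Polynomial.Chebyshev.U_add_two ℝ (k : ℤ)
      have h1 := ih k (by omega)
      have h2 := ih (k + 1) (by omega)
      push_cast at h ⊢
      rw [show (k : ℤ) + 2 = ((k : ℤ) + 1) + 1 by ring] at h ⊢
      rw [h]
      push_cast at h1 h2
      simp only [Polynomial.eval_sub, Polynomial.eval_mul, Polynomial.eval_ofNat,
        Polynomial.eval_X]
      rw [h2, h1]
      ring

theorem stmt_3 (n : ℕ) (hn : 1 ≤ n) (t : ℝ) (ht : t ∈ Set.Ico (-1 : ℝ) 1) :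
    (Tch n 1 - Tch n t) / (1 - t) ≤ (n : ℝ) ^ 2 ∧
    (Polynomial.derivative (Polynomial.Chebyshev.T ℝ n)).eval 1 = (n : ℝ) ^ 2 := by
  constructor
  · -- inequality part
    obtain ⟨ht1, ht2⟩ := ht
    set θ := Real.arccos t with hθ
    have hcos : Real.cos θ = t := Real.cos_arccos ht1 (le_of_lt ht2)
    have hT1 : Tch n 1 = 1 := by
      have := Polynomial.Chebyshev.T_real_cos 0 (n : ℤ)
      simpa [Tch] using this
    have hTt : Tch n t = Real.cos (n * θ) := by
      have := Polynomial.Chebyshev.T_real_cos θ (n : ℤ)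
      rw [hcos] at this
      simpa [Tch] using this
    rw [hT1, hTt]
    have hpos : 0 < 1 - t := by linarith
    rw [div_le_iff₀ hpos]
    -- 1 - cos (nθ) ≤ n² (1 - cos θ)
    have key : 1 - Real.cos (n * θ) ≤ (n : ℝ) ^ 2 * (1 - Real.cos θ) := by
      rw [one_sub_cos (n * θ), one_sub_cos θ]
      have h1 : (n : ℝ) * θ / 2 = n * (θ / 2) := by ring
      rw [h1]
      have h2 := abs_sin_nat_mul_le n (θ / 2)
      have h3 : Real.sin (n * (θ / 2)) ^ 2 ≤ ((n : ℝ) * |Real.sin (θ / 2)|) ^ 2 := by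
        rw [← sq_abs]
        exact pow_le_pow_left₀ (abs_nonneg _) h2 2
      have h4 : ((n : ℝ) * |Real.sin (θ / 2)|) ^ 2 = (n : ℝ) ^ 2 * Real.sin (θ / 2) ^ 2 := by
        rw [mul_pow, sq_abs]
      nlinarith
    rw [hcos] at key
    linarith
  · -- derivative part
    rw [Polynomial.Chebyshev.T_derivative_eq_U]
    have h : ((n : ℤ) - 1) = ((n - 1 : ℕ) : ℤ) := by omega
    rw [h]
    simp only [Polynomial.eval_mul, Polynomial.eval_intCast]
    rw [U_eval_one' (n - 1)]
    have : ((n - 1 : ℕ) : ℝ) = (n : ℝ) - 1 := by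
      have : (1 : ℕ) ≤ n := hn
      push_cast [Nat.cast_sub this]
      ring
    rw [this]
    push_cast
    ring
end

section
/- For n ≥ 7 and t ∈ [cos(2π/n), 1), the function f(t) := (1-t)·n²(n²-1)/3 - 2(1+t)·n² + 2(1+t)·(1 - T_n(t))/(1-t) is convex on [cos(2π/n), 1). -/
open Real

/-!
Up to an affine function of `t`, the function is `q(t) = 2(1 + t)P(t)` with
`P = (1 - T_n)/(1 - t)`. Substitute `t = 2s² - 1 = T_2(s)`: since `T_{2n} = 2T_n² - 1` and
`T_n² + (1 - X²)U_{n-1}² = 1`, one gets `P(2s² - 1) = U_{n-1}(s)²`, so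
`q(2s² - 1) = s² R(s)` with `R = 4U_{n-1}²`. Differentiating twice in `s` gives
`16 s³ q''(t) = s² (3R'(s) + s R''(s))`. All roots of `U_{n-1}` are at most `cos(π/n)`, so
every derivative of `U_{n-1}`, hence of `R`, is nonnegative for `s ≥ cos(π/n)`, which is exactly
the range `t ≥ cos(2π/n)`.
-/

open Polynomial Polynomial.Chebyshev

namespace Polynomial

lemma iterate_derivative_C_eval_nonneg {R : Type*} [Semiring R] [Preorder R] {c t : R}
    (hc : 0 ≤ c) (k : ℕ) : 0 ≤ (derivative^[k] (C c)).eval t := by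
  cases k with
  | zero => simpa using hc
  | succ k => simp

section IterateDerivative

variable {R : Type*} [CommRing R] [PartialOrder R] [IsOrderedRing R] {t : R}

lemma iterate_derivative_mul_eval_nonneg {p q : R[X]}
    (hp : ∀ k, 0 ≤ (derivative^[k] p).eval t) (hq : ∀ k, 0 ≤ (derivative^[k] q).eval t)
    (k : ℕ) :
    0 ≤ (derivative^[k] (p * q)).eval t := by
  rw [iterate_derivative_mul, eval_finsetSum]
  refine Finset.sum_nonneg fun j _ => ?_
  rw [eval_smul, eval_mul]
  exact nsmul_nonneg (mul_nonneg (hp _) (hq _)) _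

lemma iterate_derivative_X_sub_C_eval_nonneg {r : R} (hr : r ≤ t) (k : ℕ) :
    0 ≤ (derivative^[k] (X - C r)).eval t := by
  match k with
  | 0 => simpa using hr
  | 1 => simp
  | k + 2 => simp

lemma iterate_derivative_eval_nonneg_of_roots_le [IsDomain R] {p : R[X]}
    (hsplit : p.roots.card = p.natDegree) (hlead : 0 ≤ p.leadingCoeff)
    (hroots : ∀ r ∈ p.roots, r ≤ t) (k : ℕ) :
    0 ≤ (derivative^[k] p).eval t := by
  rw [← C_leadingCoeff_mul_prod_multiset_X_sub_C hsplit]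
  refine iterate_derivative_mul_eval_nonneg (iterate_derivative_C_eval_nonneg hlead) ?_ k
  refine Multiset.prod_induction (fun q => ∀ k, 0 ≤ (derivative^[k] q).eval t) _
    (fun _ _ => iterate_derivative_mul_eval_nonneg)
    (iterate_derivative_C_eval_nonneg zero_le_one) ?_
  simp only [Multiset.mem_map]
  rintro _ ⟨r, hr, rfl⟩
  exact iterate_derivative_X_sub_C_eval_nonneg (hroots r hr)

end IterateDerivative

lemma convexOn_eval_of_derivative_derivative_nonneg {D : Set ℝ} (hD : Convex ℝ D) (p : ℝ[X])
    (h : ∀ x ∈ interior D, 0 ≤ (derivative (derivative p)).eval x) :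
    ConvexOn ℝ D (fun x => p.eval x) :=
  convexOn_of_hasDerivWithinAt2_nonneg hD p.continuous.continuousOn
    (fun x _ => (p.hasDerivAt x).hasDerivWithinAt)
    (fun x _ => ((derivative p).hasDerivAt x).hasDerivWithinAt) h

lemma derivative_derivative_eval_nonneg_of_comp_eq_X_sq_mul {K : Type*} [Field K] [LinearOrder K]
    [IsStrictOrderedRing K] {q r : K[X]} (h : q.comp (2 * X ^ 2 - 1) = X ^ 2 * r) {s : K}
    (hs : 0 < s) (hr₁ : 0 ≤ (derivative r).eval s)
    (hr₂ : 0 ≤ (derivative (derivative r)).eval s) :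
    0 ≤ (derivative (derivative q)).eval (2 * s ^ 2 - 1) := by
  have h₁ := congrArg (fun p => (derivative p).eval s) h
  have h₂ := congrArg (fun p => (derivative (derivative p)).eval s) h
  simp only [derivative_comp, derivative_sub, derivative_mul, derivative_ofNat, zero_mul,
    derivative_X_pow_succ, Nat.cast_one, map_add, map_one, pow_one, zero_add, derivative_one,
    sub_zero, eval_mul, eval_ofNat, eval_add, eval_one, eval_X, eval_comp, eval_sub, eval_pow,
    add_zero, derivative_X, mul_one] at h₁ h₂
  set d₂ := (derivative (derivative q)).eval (2 * s ^ 2 - 1)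
  have key : 16 * s ^ 3 * d₂ =
      s ^ 2 * (3 * (derivative r).eval s + s * (derivative (derivative r)).eval s) := by
    linear_combination s * h₂ - h₁
  have : 0 ≤ 16 * s ^ 3 * d₂ := key ▸ by positivity
  exact nonneg_of_mul_nonneg_right this (by positivity)

end Polynomial

namespace Polynomial.Chebyshev

lemma card_roots_U_real (m : ℕ) : (U ℝ m).roots.card = m := by
  rw [roots_U_real, Finset.image_val, Finset.range_val,
    Multiset.dedup_eq_self.mpr (roots_U_real_nodup m)]
  simp

lemma iterate_derivative_U_real_eval_nonneg (m : ℕ) {s : ℝ} (hs : cos (π / (m + 1)) ≤ s)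
    (k : ℕ) : 0 ≤ (derivative^[k] (U ℝ m)).eval s := by
  refine iterate_derivative_eval_nonneg_of_roots_le (by simp [card_roots_U_real])
    (by simp [leadingCoeff_U_natCast]) (fun r hr => hs.trans' ?_) k
  simp only [roots_U_real, Finset.mem_val, Finset.mem_image, Finset.mem_range] at hr
  obtain ⟨j, hj, rfl⟩ := hr
  have hjm : (j : ℝ) ≤ m := by exact_mod_cast hj.le
  refine cos_le_cos_of_nonneg_of_le_pi (by positivity) ?_ ?_
  · rw [div_le_iff₀ (by positivity)]; nlinarith [pi_pos]
  · gcongr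
    exact le_mul_of_one_le_left pi_pos.le (by simp)

section
variable {R : Type*} [CommRing R]

lemma T_sq_add_one_sub_X_sq_mul_U_sq (n : ℤ) :
    T R (n + 1) ^ 2 + (1 - X ^ 2) * U R n ^ 2 = 1 := by
  have h := congrArg (·.comp (2 * X)) (S_sq_add_S_sq R n)
  simp only [sub_comp, add_comp, mul_comp, pow_comp, X_comp, one_comp, S_comp_two_mul_X] at h
  rw [T_eq_U_sub_X_mul_U, add_sub_cancel_right]
  linear_combination h

lemma one_sub_T_two_mul (n : ℤ) : 1 - T R (2 * (n + 1)) = 2 * (1 - X ^ 2) * U R n ^ 2 := by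
  rw [T_mul, T_two]
  simp only [sub_comp, mul_comp, pow_comp, X_comp, one_comp, ofNat_comp]
  linear_combination -2 * T_sq_add_one_sub_X_sq_mul_U_sq (R := R) n

lemma comp_two_mul_X_sq_sub_one_eq_U_sq [IsDomain R] [NeZero (2 : R)] {P : R[X]} {n : ℤ}
    (hP : (1 - X) * P = 1 - T R (n + 1)) : P.comp (2 * X ^ 2 - 1) = U R n ^ 2 := by
  have h := congrArg (·.comp (2 * X ^ 2 - 1)) hP
  simp only [mul_comp, sub_comp, one_comp, X_comp] at h
  rw [← T_two, ← T_mul, mul_comm (n + 1), one_sub_T_two_mul, T_two] at h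
  have h2 : (2 * (1 - X ^ 2) : R[X]) ≠ 0 := fun h0 => by
    have h00 := congrArg (eval 0) h0
    norm_num at h00
    exact two_ne_zero h00
  refine mul_left_cancel₀ h2 ?_
  linear_combination h

lemma exists_one_sub_X_mul_eq_one_sub_T (n : ℤ) :
    ∃ P : R[X], (1 - X) * P = 1 - T R n := by
  obtain ⟨P, hP⟩ := dvd_iff_isRoot.mpr (show IsRoot (T R n - 1) 1 by simp [T_eval_one])
  exact ⟨P, by rw [map_one] at hP; linear_combination hP⟩

end

lemma derivative_derivative_two_mul_one_add_X_mul_eval_nonneg (m : ℕ) {P : ℝ[X]}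
    (hP : (1 - X) * P = 1 - T ℝ (m + 1)) {t : ℝ} (ht : cos (2 * π / (m + 1)) < t) :
    0 ≤ (derivative (derivative (2 * (1 + X) * P))).eval t := by
  set s := √((1 + t) / 2)
  have ht₁ : -1 < t := (neg_one_le_cos _).trans_lt ht
  have hs : 0 < s := sqrt_pos.mpr (by linarith)
  have hts : t = 2 * s ^ 2 - 1 := by rw [sq_sqrt (by linarith)]; ring
  have hs_cos : cos (π / (m + 1)) ≤ s := by
    refine (le_abs_self _).trans (abs_le_sqrt ?_)
    rw [cos_sq, mul_div_assoc']
    linarith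
  have hcomp : (2 * (1 + X) * P).comp (2 * X ^ 2 - 1) =
      X ^ 2 * (Polynomial.C 4 * (U ℝ m * U ℝ m)) := by
    simp only [mul_comp, add_comp, one_comp, X_comp, ofNat_comp, C_ofNat,
      comp_two_mul_X_sq_sub_one_eq_U_sq hP]
    ring
  have hU : ∀ k, 0 ≤ (derivative^[k] (Polynomial.C 4 * (U ℝ m * U ℝ m))).eval s :=
    iterate_derivative_mul_eval_nonneg (iterate_derivative_C_eval_nonneg (by norm_num))
      (iterate_derivative_mul_eval_nonneg (iterate_derivative_U_real_eval_nonneg m hs_cos)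
        (iterate_derivative_U_real_eval_nonneg m hs_cos))
  rw [hts]
  exact derivative_derivative_eval_nonneg_of_comp_eq_X_sq_mul hcomp hs (hU 1) (hU 2)

end Polynomial.Chebyshev

theorem stmt_10_general (n : ℕ) :
    ConvexOn ℝ (Set.Ico (Real.cos (2 * π / n)) 1)
      (fun t : ℝ => (1 - t) * ((n : ℝ) ^ 2 * ((n : ℝ) ^ 2 - 1) / 3)
        - 2 * (1 + t) * (n : ℝ) ^ 2 + 2 * (1 + t) * (1 - Tch n t) / (1 - t)) := by
  obtain _ | m := n
  -- `2 * π / 0 = 0`, so the interval is `Ico 1 1 = ∅`.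
  · exact ⟨convex_Ico _ _, fun x hx => absurd hx.2 (by simpa using hx.1)⟩
  obtain ⟨P, hP⟩ := exists_one_sub_X_mul_eq_one_sub_T (R := ℝ) (m + 1)
  set W : ℝ[X] := C (((m + 1 : ℕ) : ℝ) ^ 2 * (((m + 1 : ℕ) : ℝ) ^ 2 - 1) / 3) * (1 - X)
    - C (2 * ((m + 1 : ℕ) : ℝ) ^ 2) * (1 + X) + 2 * (1 + X) * P
  have hW : derivative (derivative W) = derivative (derivative (2 * (1 + X) * P)) := by
    simp only [W, derivative_add, derivative_sub, derivative_mul, derivative_C, derivative_one,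
      derivative_X, derivative_ofNat, derivative_zero]
    ring
  refine (convexOn_eval_of_derivative_derivative_nonneg (convex_Ico _ _) W fun t ht => ?_).congr
    fun t ht => ?_
  · rw [interior_Ico] at ht
    rw [hW]
    exact derivative_derivative_two_mul_one_add_X_mul_eval_nonneg m hP (by exact_mod_cast ht.1)
  · have hne : 1 - t ≠ 0 := sub_ne_zero.mpr ht.2.ne'
    have hPt := congrArg (eval t) hP
    simp only [eval_mul, eval_sub, eval_one, eval_X] at hPt
    simp only [W, Tch, eval_add, eval_sub, eval_mul, eval_C, eval_one, eval_X, eval_ofNat]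
    field_simp
    push_cast at hPt ⊢
    linear_combination 6 * (1 + t) * hPt

theorem stmt_10 (n : ℕ) (hn : 7 ≤ n) :
    ConvexOn ℝ (Set.Ico (Real.cos (2 * π / n)) 1)
      (fun t : ℝ => (1 - t) * ((n : ℝ) ^ 2 * ((n : ℝ) ^ 2 - 1) / 3)
        - 2 * (1 + t) * (n : ℝ) ^ 2 + 2 * (1 + t) * (1 - Tch n t) / (1 - t)) :=
  stmt_10_general n
end

section
/- For n ≥ 8, cot²(3π/(4n)) < n²·(1 - √(2/3 + 1/(3n²))). -/
open Real

theorem stmt_13 (n : ℕ) (hn : 8 ≤ n) :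
    Real.cot (3 * π / (4 * n)) ^ 2
      < (n : ℝ) ^ 2 * (1 - Real.sqrt (2 / 3 + 1 / (3 * (n : ℝ) ^ 2))) := by
  have hn8 : (8 : ℝ) ≤ (n : ℝ) := by exact_mod_cast hn
  have hnpos : (0 : ℝ) < n := by linarith
  have hpi : (3.141592 : ℝ) < π := Real.pi_gt_d6
  set α : ℝ := 3 * π / (4 * n) with hαdef
  have hα0 : 0 < α := by
    apply div_pos (by linarith) (by linarith)
  have hα2 : α < π / 2 := by
    rw [hαdef, div_lt_div_iff₀ (by linarith) (by norm_num)]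
    nlinarith
  have hsin : 0 < Real.sin α := Real.sin_pos_of_pos_of_lt_pi hα0 (by linarith)
  have hcos : 0 < Real.cos α := Real.cos_pos_of_mem_Ioo ⟨by linarith, hα2⟩
  have htan : α < Real.tan α := Real.lt_tan hα0 hα2
  have htan' : Real.tan α = Real.sin α / Real.cos α := Real.tan_eq_sin_div_cos α
  have hcot : Real.cot α = Real.cos α / Real.sin α := Real.cot_eq_cos_div_sin α
  have hcotpos : 0 < Real.cot α := by rw [hcot]; positivity
  have hcotlt : Real.cot α < 1 / α := by
    rw [hcot, div_lt_div_iff₀ hsin hα0]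
    rw [htan', lt_div_iff₀ hcos] at htan
    linarith
  have hsq : Real.cot α ^ 2 < (1 / α) ^ 2 := by
    apply pow_lt_pow_left₀ hcotlt (le_of_lt hcotpos)
    norm_num
  have hα1 : (1 : ℝ) / α = 4 * n / (3 * π) := by
    rw [hαdef]; field_simp
  -- bound the sqrt
  have hs1 : Real.sqrt (2 / 3 + 1 / (3 * (n : ℝ) ^ 2)) < 6.5575 / 8 := by
    have h1 : 2 / 3 + 1 / (3 * (n : ℝ) ^ 2) ≤ 43 / 64 := by
      have : 1 / (3 * (n : ℝ) ^ 2) ≤ 1 / 192 := by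
        apply div_le_div_of_nonneg_left (by norm_num) (by norm_num)
        nlinarith
      linarith
    calc Real.sqrt (2 / 3 + 1 / (3 * (n : ℝ) ^ 2)) ≤ Real.sqrt (43 / 64) :=
          Real.sqrt_le_sqrt h1
      _ < 6.5575 / 8 := by
          rw [show (6.5575 : ℝ) / 8 = Real.sqrt ((6.5575 / 8) ^ 2) by
            rw [Real.sqrt_sq (by norm_num)]]
          apply Real.sqrt_lt_sqrt (by norm_num)
          norm_num
  have hkey : (4 * (n : ℝ) / (3 * π)) ^ 2
      < (n : ℝ) ^ 2 * (1 - Real.sqrt (2 / 3 + 1 / (3 * (n : ℝ) ^ 2))) := by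
    have hπpos : (0 : ℝ) < π := by linarith
    have h2 : (4 * (n : ℝ) / (3 * π)) ^ 2 = 16 * n ^ 2 / (9 * π ^ 2) := by
      ring
    rw [h2, div_lt_iff₀ (by positivity)]
    have hπsq : (88.82 : ℝ) < 9 * π ^ 2 := by nlinarith
    have hsnn : (0:ℝ) ≤ Real.sqrt (2 / 3 + 1 / (3 * (n : ℝ) ^ 2)) := Real.sqrt_nonneg _
    set s := Real.sqrt (2 / 3 + 1 / (3 * (n : ℝ) ^ 2))
    have h3 : (0.1803125 : ℝ) * 88.82 > 16 := by norm_num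
    have h4 : (0.1803125 : ℝ) * 88.82 < (1 - s) * (9 * π ^ 2) := by
      apply mul_lt_mul' (by linarith) hπsq (by norm_num) (by linarith)
    have hn2 : (0:ℝ) < (n:ℝ)^2 := by positivity
    nlinarith [mul_lt_mul_of_pos_left h4 hn2]
  calc Real.cot α ^ 2 < (1 / α) ^ 2 := hsq
    _ = (4 * (n : ℝ) / (3 * π)) ^ 2 := by rw [hα1]
    _ < _ := hkey
end

section
/- Let n be even, n ≥ 4, let t_i = cos(πi/n) for 0 ≤ i ≤ n, and set P(x) = (x²-1)T_n'(x) and q(x) = (1/n²)·P(x)·Σ_{i=1}^{(n-2)/2} (1/(x-t_i) - 1/(x+t_i)). Then q is a polynomial of degree at most n, and |q(t_j)| ≤ 1 for every 0 ≤ j ≤ n. -/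
/-!
Every node `tⱼ = cos (πj/n)` is a root of `P = (x² - 1) T_n'`, so the quotient `P / (x - tᵢ)`
vanishes at all nodes other than `tᵢ` and equals `P'(tᵢ)` at `tᵢ`. By the Chebyshev differential
equation, `P' = n² T_n + x T_n'`, so `P'(tᵢ) = (-1)ⁱ n²` at interior nodes. As `-tᵢ = t_{n-i}`,
`q(tⱼ)` is `±1` when exactly one of `j`, `n - j` lies in `[1, (n-2)/2]` (they never both do),
and `0` otherwise.
-/

open Real

/-- Derivative of the Chebyshev polynomial, as a real function. -/
noncomputable def Tch' (n : ℕ) (x : ℝ) : ℝ :=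
  (Polynomial.derivative (Polynomial.Chebyshev.T ℝ n)).eval x

namespace Polynomial

theorem eval_divByMonic_X_sub_C_self {R : Type*} [CommRing R] (p : R[X]) (a : R) :
    (p /ₘ (X - C a)).eval a = (derivative p).eval a := by
  simpa using congrArg (eval a) (divByMonic_add_X_sub_C_mul_derivative_divByMonic_eq_derivative p a)

theorem eval_divByMonic_X_sub_C_of_isRoot {K : Type*} [Field K] {p : K[X]} {a x : K}
    (ha : p.IsRoot a) (hx : x ≠ a) : (p /ₘ (X - C a)).eval x = p.eval x / (x - a) := by
  rw [eq_div_iff (sub_ne_zero.mpr hx), mul_comm]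
  simpa using congrArg (eval x) (mul_divByMonic_eq_iff_isRoot.mpr ha)

theorem eval_divByMonic_X_sub_C_of_isRoot_of_isRoot {K : Type*} [Field K] [DecidableEq K]
    {p : K[X]} {a x : K} (ha : p.IsRoot a) (hx : p.IsRoot x) :
    (p /ₘ (X - C a)).eval x = if x = a then (derivative p).eval a else 0 := by
  split_ifs with hxa
  · rw [hxa, eval_divByMonic_X_sub_C_self]
  · rw [eval_divByMonic_X_sub_C_of_isRoot ha hxa, hx.eq_zero, zero_div]

end Polynomial

namespace Polynomial.Chebyshev

noncomputable def nodePoly (R : Type*) [CommRing R] (n : ℤ) : R[X] :=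
  (X ^ 2 - 1) * derivative (T R n)

theorem derivative_nodePoly (R : Type*) [CommRing R] (n : ℤ) :
    derivative (nodePoly R n) = (n ^ 2 : R[X]) * T R n + X * derivative (T R n) := by
  have h := one_sub_X_sq_mul_derivative_derivative_T_eq_poly_in_T (R := R) n
  rw [Function.iterate_succ, Function.iterate_one, Function.comp_apply] at h
  simp only [nodePoly, derivative_mul, derivative_sub, derivative_X_pow, derivative_one,
    Nat.cast_ofNat, map_ofNat]
  linear_combination (norm := (push_cast; ring_nf)) -h

theorem natDegree_nodePoly_le (n : ℕ) : (nodePoly ℝ n).natDegree ≤ n + 1 := by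
  rcases eq_or_ne n 0 with rfl | hn
  · simp [nodePoly]
  have h1 : ((X : ℝ[X]) ^ 2 - 1).natDegree ≤ 2 := by compute_degree
  have h2 : (derivative (T ℝ n)).natDegree ≤ n - 1 :=
    (natDegree_derivative_le _).trans (by simp)
  exact natDegree_mul_le.trans (by omega)

theorem eval_derivative_T_real_cos_mul_sin (n : ℤ) (θ : ℝ) :
    (derivative (T ℝ n)).eval (cos θ) * sin θ = n * sin (n * θ) := by
  have h := U_real_cos θ (n - 1)
  rw [T_derivative_eq_U, eval_mul, eval_intCast, mul_assoc, h]
  push_cast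
  ring_nf

theorem eval_nodePoly_real_cos (n : ℤ) (θ : ℝ) :
    (nodePoly ℝ n).eval (cos θ) = -(n * sin θ * sin (n * θ)) := by
  have h := eval_derivative_T_real_cos_mul_sin n θ
  simp only [nodePoly, eval_mul, eval_sub, eval_pow, eval_X, eval_one]
  linear_combination (eval (cos θ) (derivative (T ℝ n))) * sin_sq_add_cos_sq θ - sin θ * h

theorem sin_mul_node (n i : ℕ) : sin (n * (i * π / n)) = 0 := by
  rcases eq_or_ne n 0 with rfl | hn
  · simp
  rw [mul_div_cancel₀ _ (by exact_mod_cast hn), sin_nat_mul_pi]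

theorem isRoot_nodePoly_node (n i : ℕ) : (nodePoly ℝ n).IsRoot (node n i) := by
  rw [IsRoot, node, eval_nodePoly_real_cos, Int.cast_natCast, sin_mul_node, mul_zero, neg_zero]

theorem eval_derivative_T_real_node {n i : ℕ} (h0 : 0 < i) (hi : i < n) :
    (derivative (T ℝ n)).eval (node n i) = 0 := by
  have hn : (0 : ℝ) < n := by exact_mod_cast h0.trans hi
  have hsin : sin (i * π / n) ≠ 0 := by
    refine (sin_pos_of_pos_of_lt_pi (by positivity) ?_).ne'
    rw [div_lt_iff₀ hn, mul_comm]
    gcongr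
  have h := eval_derivative_T_real_cos_mul_sin n (i * π / n)
  rw [Int.cast_natCast, sin_mul_node, mul_zero] at h
  exact (mul_eq_zero.mp h).resolve_right hsin

theorem eval_derivative_nodePoly_node {n i : ℕ} (h0 : 0 < i) (hi : i < n) :
    (derivative (nodePoly ℝ n)).eval (node n i) = n ^ 2 * (-1) ^ i := by
  rw [derivative_nodePoly, eval_add, eval_mul, eval_mul, eval_derivative_T_real_node h0 hi,
    eval_T_real_node (Finset.mem_Iic.mpr hi.le)]
  simp

theorem neg_node {n i : ℕ} (hn : n ≠ 0) (hi : i ≤ n) : -node n i = node n (n - i) := by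
  rw [node, node, ← cos_pi_sub, Nat.cast_sub hi]
  congr 1
  field_simp

theorem node_injOn (n : ℕ) : Set.InjOn (node n) (Set.Iic n) :=
  (strictAntiOn_node n).injOn.mono fun i hi => by simpa [Nat.lt_succ_iff] using hi

end Polynomial.Chebyshev

section SignedQuotientSum

open Polynomial Polynomial.Chebyshev

/- The polynomial `q`: each `P(x) / (x ∓ tᵢ)` is the exact quotient `P /ₘ (X ∓ C tᵢ)`, since
`±tᵢ` are roots of `P = nodePoly ℝ n`. -/
noncomputable def signedQuotientSum (n : ℕ) : ℝ[X] :=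
  C (1 / (n : ℝ) ^ 2) * ∑ i ∈ Finset.Icc 1 ((n - 2) / 2),
    (nodePoly ℝ n /ₘ (X - C (node n i)) - nodePoly ℝ n /ₘ (X - C (-node n i)))

theorem natDegree_signedQuotientSum_le (n : ℕ) : (signedQuotientSum n).natDegree ≤ n := by
  have hquot (a : ℝ) : (nodePoly ℝ n /ₘ (X - C a)).natDegree ≤ n := by
    rw [natDegree_divByMonic _ (monic_X_sub_C a), natDegree_X_sub_C]
    have := natDegree_nodePoly_le n
    omega
  refine (natDegree_C_mul_le _ _).trans (natDegree_sum_le_of_forall_le _ _ fun i _ => ?_)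
  exact (natDegree_sub_le _ _).trans (max_le (hquot _) (hquot _))

theorem eval_signedQuotientSum {n : ℕ} {x : ℝ}
    (hx : ∀ i ∈ Finset.Icc 1 ((n - 2) / 2), x ≠ node n i ∧ x ≠ -node n i) :
    (signedQuotientSum n).eval x = 1 / (n : ℝ) ^ 2 * (nodePoly ℝ n).eval x *
      ∑ i ∈ Finset.Icc 1 ((n - 2) / 2), (1 / (x - node n i) - 1 / (x + node n i)) := by
  have hterm : ∀ i ∈ Finset.Icc 1 ((n - 2) / 2),
      (nodePoly ℝ n /ₘ (X - C (node n i)) - nodePoly ℝ n /ₘ (X - C (-node n i))).eval x =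
        (nodePoly ℝ n).eval x * (1 / (x - node n i) - 1 / (x + node n i)) := by
    intro i hi
    have hroot : (nodePoly ℝ n).IsRoot (-node n i) := by
      rw [neg_node (by grind) (by grind)]
      exact isRoot_nodePoly_node n _
    rw [eval_sub, eval_divByMonic_X_sub_C_of_isRoot (isRoot_nodePoly_node n i) (hx i hi).1,
      eval_divByMonic_X_sub_C_of_isRoot hroot (hx i hi).2, sub_neg_eq_add]
    ring
  rw [signedQuotientSum, eval_mul, eval_C, eval_finsetSum, Finset.sum_congr rfl hterm,
    ← Finset.mul_sum, mul_assoc]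

theorem eval_signedQuotientSum_node {n j : ℕ} (hj : j ≤ n) :
    (signedQuotientSum n).eval (node n j) =
      (if j ∈ Finset.Icc 1 ((n - 2) / 2) then (-1) ^ j else 0) -
        (if n - j ∈ Finset.Icc 1 ((n - 2) / 2) then (-1) ^ j else 0) := by
  set S := Finset.Icc 1 ((n - 2) / 2)
  set P' := (derivative (nodePoly ℝ n)).eval (node n j)
  have hterm : ∀ i ∈ S,
      (nodePoly ℝ n /ₘ (X - C (node n i)) - nodePoly ℝ n /ₘ (X - C (-node n i))).eval (node n j) =
        (if j = i then P' else 0) - (if n - j = i then P' else 0) := by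
    intro i hi
    have hin : i ≤ n := by grind
    rw [eval_sub, neg_node (by grind) hin,
      eval_divByMonic_X_sub_C_of_isRoot_of_isRoot (isRoot_nodePoly_node n _)
        (isRoot_nodePoly_node n _),
      eval_divByMonic_X_sub_C_of_isRoot_of_isRoot (isRoot_nodePoly_node n _)
        (isRoot_nodePoly_node n _)]
    simp only [(node_injOn n).eq_iff hj hin, (node_injOn n).eq_iff hj (Nat.sub_le n i)]
    congr 1 <;> split_ifs <;> grind
  have hP' (h : j ∈ S ∨ n - j ∈ S) : 1 / (n : ℝ) ^ 2 * P' = (-1) ^ j := by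
    have hj0 : 0 < j := by grind
    have hjn : j < n := by grind
    have hn : (n : ℝ) ≠ 0 := by exact_mod_cast (hj0.trans hjn).ne'
    rw [show P' = _ from eval_derivative_nodePoly_node hj0 hjn]
    field_simp
  rw [signedQuotientSum, eval_mul, eval_C, eval_finsetSum, Finset.sum_congr rfl hterm,
    Finset.sum_sub_distrib, Finset.sum_ite_eq, Finset.sum_ite_eq]
  split_ifs with h1 h2 h2 <;> grind

theorem abs_eval_signedQuotientSum_node_le_one {n j : ℕ} (hj : j ≤ n) :
    |(signedQuotientSum n).eval (node n j)| ≤ 1 := by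
  have hdisjoint : j ∈ Finset.Icc 1 ((n - 2) / 2) → n - j ∉ Finset.Icc 1 ((n - 2) / 2) := by
    grind
  rw [eval_signedQuotientSum_node hj]
  split_ifs with h1 h2 h2
  · exact absurd h2 (hdisjoint h1)
  all_goals simp

end SignedQuotientSum

theorem stmt_15_general (n : ℕ)
    (t : ℕ → ℝ) (htdef : ∀ i, t i = Real.cos (π * i / n)) :
    ∃ Q : Polynomial ℝ, Q.natDegree ≤ n ∧
      (∀ x : ℝ, (∀ i ∈ Finset.Icc 1 ((n - 2) / 2), x ≠ t i ∧ x ≠ -(t i)) →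
        Q.eval x = (1 / (n : ℝ) ^ 2) * ((x ^ 2 - 1) * Tch' n x) *
          ∑ i ∈ Finset.Icc 1 ((n - 2) / 2), (1 / (x - t i) - 1 / (x + t i))) ∧
      (∀ j ≤ n, |Q.eval (t j)| ≤ 1) := by
  obtain rfl : t = Polynomial.Chebyshev.node n :=
    funext fun i => by rw [htdef, Polynomial.Chebyshev.node, mul_comm]
  refine ⟨signedQuotientSum n, natDegree_signedQuotientSum_le n, fun x hx => ?_,
    fun j hj => abs_eval_signedQuotientSum_node_le_one hj⟩
  rw [eval_signedQuotientSum hx, Polynomial.Chebyshev.nodePoly, Polynomial.eval_mul, Tch']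
  simp

theorem stmt_15 (n : ℕ) (hn : 4 ≤ n) (hev : Even n)
    (t : ℕ → ℝ) (htdef : ∀ i, t i = Real.cos (π * i / n)) :
    ∃ Q : Polynomial ℝ, Q.natDegree ≤ n ∧
      (∀ x : ℝ, (∀ i ∈ Finset.Icc 1 ((n - 2) / 2), x ≠ t i ∧ x ≠ -(t i)) →
        Q.eval x = (1 / (n : ℝ) ^ 2) * ((x ^ 2 - 1) * Tch' n x) *
          ∑ i ∈ Finset.Icc 1 ((n - 2) / 2), (1 / (x - t i) - 1 / (x + t i))) ∧
      (∀ j ≤ n, |Q.eval (t j)| ≤ 1) :=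
  stmt_15_general n t htdef
end
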